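/- arXiv:1312.1053 — 2 statements merged into one kernel-verified Lean document; each statement's English description precedes it below -/
import Mathlib

section
/- With f(k,a) = γ(a)k + β(a), γ(a)+β(a) = c as above, the measure π_f(·|a) is the unique probability measure ω(·|a) on ℕ satisfying the recursion ω(k|a) = (c/f(k,a)) · (1 - ∑_{j=0}^{k} ω(j|a)) for all k ≥ 0. -/
/-!
Write `P n = ∏_{i<n} f(i)/(c + f(i))`, the probability of surviving the first `n` steps. Then
`π_f(k) = P k - P (k+1)`, so the partial sums telescope to `1 - P n`, and the recursion is an
algebraic identity between consecutive terms. Since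
`1/P n = ∏_{i<n} (1 + c/f(i)) ≥ c ∑_{i<n} 1/f(i)`, divergence of `∑ 1/f` forces `P n → 0`,
i.e. total mass `1`. Uniqueness holds already among all real sequences: the recursion can be
solved for `ω(k)` in terms of `ω(0), …, ω(k-1)`.
-/

/-- The degree distribution `π_f(k|a)` of the fitness preferential attachment model. -/
noncomputable def piPA {X : Type*} (f : ℕ → X → ℝ) (c : ℝ) (k : ℕ) (a : X) : ℝ :=
  (c / (c + f k a)) * ∏ i ∈ Finset.range k, f i a / (c + f i a)

open Filter Topology Finset

theorem Finset.one_add_sum_le_prod_one_add {ι R : Type*} [CommSemiring R] [PartialOrder R]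
    [IsOrderedRing R] (s : Finset ι) {x : ι → R} (hx : ∀ i ∈ s, 0 ≤ x i) :
    1 + ∑ i ∈ s, x i ≤ ∏ i ∈ s, (1 + x i) := by
  classical
  induction s using Finset.induction_on with
  | empty => simp
  | insert j s hj ih =>
    rw [sum_insert hj, prod_insert hj]
    have hxj : 0 ≤ x j := hx j (mem_insert_self j s)
    have hxs : ∀ i ∈ s, 0 ≤ x i := fun i hi => hx i (mem_insert_of_mem hi)
    have ih := ih hxs
    have one_le : 1 ≤ ∏ i ∈ s, (1 + x i) := (le_add_of_nonneg_right (sum_nonneg hxs)).trans ih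
    calc 1 + (x j + ∑ i ∈ s, x i) = x j * 1 + (1 + ∑ i ∈ s, x i) := by ring
      _ ≤ x j * ∏ i ∈ s, (1 + x i) + ∏ i ∈ s, (1 + x i) :=
          add_le_add (mul_le_mul_of_nonneg_left one_le hxj) ih
      _ = (1 + x j) * ∏ i ∈ s, (1 + x i) := by ring

theorem tendsto_prod_range_div_add_atTop_zero {g : ℕ → ℝ} {c : ℝ} (hc : 0 < c)
    (hg : ∀ i, 0 < g i) (hdiv : ¬Summable fun i => 1 / g i) :
    Tendsto (fun n => ∏ i ∈ range n, g i / (c + g i)) atTop (𝓝 0) := by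
  have h_inv : ∀ n,
      ∏ i ∈ range n, g i / (c + g i) = (∏ i ∈ range n, (1 + c * (1 / g i)))⁻¹ := by
    intro n
    rw [← prod_inv_distrib]
    refine prod_congr rfl fun i _ => ?_
    have := (hg i).ne'
    field_simp
    ring
  have h_sum : Tendsto (fun n => c * ∑ i ∈ range n, 1 / g i) atTop atTop :=
    ((not_summable_iff_tendsto_nat_atTop_of_nonneg fun i => (one_div_pos.2 (hg i)).le).1
      hdiv).const_mul_atTop hc
  have h_prod : Tendsto (fun n => ∏ i ∈ range n, (1 + c * (1 / g i))) atTop atTop := by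
    refine tendsto_atTop_mono (fun n => ?_) h_sum
    have := (range n).one_add_sum_le_prod_one_add
      fun i _ => (mul_pos hc (one_div_pos.2 (hg i))).le
    rw [mul_sum]
    linarith
  simpa only [h_inv, Function.comp_def] using tendsto_inv_atTop_zero.comp h_prod

theorem eq_div_mul_one_sub_add_iff {x s c g : ℝ} (hg : g ≠ 0) (hcg : c + g ≠ 0) :
    x = c / g * (1 - (s + x)) ↔ x = c / (c + g) * (1 - s) := by
  rw [div_mul_eq_mul_div, div_mul_eq_mul_div, eq_div_iff hg, eq_div_iff hcg]
  constructor <;> intro h <;> linarith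

theorem eq_of_forall_eq_div_mul_one_sub_sum {g : ℕ → ℝ} {c : ℝ} (hg : ∀ k, g k ≠ 0)
    (hcg : ∀ k, c + g k ≠ 0) {ω ν : ℕ → ℝ}
    (hω : ∀ k, ω k = c / g k * (1 - ∑ j ∈ range (k + 1), ω j))
    (hν : ∀ k, ν k = c / g k * (1 - ∑ j ∈ range (k + 1), ν j)) : ω = ν := by
  have solved : ∀ μ : ℕ → ℝ, (∀ k, μ k = c / g k * (1 - ∑ j ∈ range (k + 1), μ j)) →
      ∀ k, μ k = c / (c + g k) * (1 - ∑ j ∈ range k, μ j) := fun μ hμ k =>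
    (eq_div_mul_one_sub_add_iff (hg k) (hcg k)).1 (sum_range_succ μ k ▸ hμ k)
  funext k
  induction k using Nat.strong_induction_on with
  | _ k ih =>
    rw [solved ω hω, solved ν hν, sum_congr rfl fun j hj => ih j (mem_range.1 hj)]

section piPA

variable {X : Type*} {f : ℕ → X → ℝ} {c : ℝ} {a : X} {k : ℕ}

theorem piPA_eq_sub (hcf : c + f k a ≠ 0) :
    piPA f c k a =
      ∏ i ∈ range k, f i a / (c + f i a) - ∏ i ∈ range (k + 1), f i a / (c + f i a) := by
  rw [piPA, prod_range_succ]
  field_simp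
  ring

theorem sum_range_piPA (hcf : ∀ k, c + f k a ≠ 0) (n : ℕ) :
    ∑ k ∈ range n, piPA f c k a = 1 - ∏ i ∈ range n, f i a / (c + f i a) := by
  simp only [piPA_eq_sub (hcf _), sum_range_sub', prod_range_zero]

theorem piPA_eq_div_mul_one_sub_sum (hf : ∀ k, f k a ≠ 0) (hcf : ∀ k, c + f k a ≠ 0) (k : ℕ) :
    piPA f c k a = c / f k a * (1 - ∑ j ∈ range (k + 1), piPA f c j a) := by
  rw [sum_range_succ, eq_div_mul_one_sub_add_iff (hf k) (hcf k), sum_range_piPA hcf,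
    sub_sub_cancel, piPA]

theorem piPA_nonneg (hc : 0 < c) (hf : ∀ k, 0 < f k a) (k : ℕ) : 0 ≤ piPA f c k a :=
  mul_nonneg (div_pos hc (add_pos hc (hf k))).le
    (prod_nonneg fun i _ => (div_pos (hf i) (add_pos hc (hf i))).le)

theorem hasSum_piPA (hc : 0 < c) (hf : ∀ k, 0 < f k a) (hdiv : ¬Summable fun k => 1 / f k a) :
    HasSum (fun k => piPA f c k a) 1 := by
  rw [hasSum_iff_tendsto_nat_of_nonneg (piPA_nonneg hc hf),
    funext (sum_range_piPA fun k => (add_pos hc (hf k)).ne')]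
  simpa using (tendsto_prod_range_div_add_atTop_zero hc hf hdiv).const_sub (1 : ℝ)

end piPA

theorem piPA_unique_solution_of_recursion_general
    {X : Type*} (c : ℝ) (hc : 0 < c)
    (f : ℕ → X → ℝ)
    (hfpos : ∀ k a, 0 < f k a)
    (hdiv : ∀ a, ¬ Summable (fun k => 1 / f k a)) (a : X) :
    ((∀ k, 0 ≤ piPA f c k a) ∧ HasSum (fun k => piPA f c k a) 1 ∧
      (∀ k, piPA f c k a
          = (c / f k a) * (1 - ∑ j ∈ Finset.range (k + 1), piPA f c j a)))
    ∧ ∀ ω : ℕ → ℝ, (∀ k, 0 ≤ ω k) → HasSum ω 1 →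
        (∀ k, ω k = (c / f k a) * (1 - ∑ j ∈ Finset.range (k + 1), ω j)) →
        ω = fun k => piPA f c k a := by
  have hf : ∀ k, f k a ≠ 0 := fun k => (hfpos k a).ne'
  have hcf : ∀ k, c + f k a ≠ 0 := fun k => (add_pos hc (hfpos k a)).ne'
  have hrec := piPA_eq_div_mul_one_sub_sum hf hcf
  exact ⟨⟨piPA_nonneg hc (hfpos · a), hasSum_piPA hc (hfpos · a) (hdiv a), hrec⟩,
    fun ω _ _ hω => eq_of_forall_eq_div_mul_one_sub_sum hf hcf hω hrec⟩

/-- `π_f(·|a)` is the unique probability measure `ω` on ℕ satisfying the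
recursion `ω(k) = (c/f(k,a)) (1 - ∑_{j=0}^k ω(j))` for all `k ≥ 0`. -/
theorem piPA_unique_solution_of_recursion
    {X : Type*} [Fintype X] (γ β : X → ℝ) (c : ℝ) (hc : 0 < c)
    (hγ : ∀ a, 0 < γ a) (hβ : ∀ a, 0 ≤ β a)
    (hsum : ∀ a, γ a + β a = c)
    (f : ℕ → X → ℝ) (hf : ∀ k a, f k a = γ a * k + β a)
    (hfpos : ∀ k a, 0 < f k a)
    (hdiv : ∀ a, ¬ Summable (fun k => 1 / f k a)) (a : X) :
    ((∀ k, 0 ≤ piPA f c k a) ∧ HasSum (fun k => piPA f c k a) 1 ∧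
      (∀ k, piPA f c k a
          = (c / f k a) * (1 - ∑ j ∈ Finset.range (k + 1), piPA f c j a)))
    ∧ ∀ ω : ℕ → ℝ, (∀ k, 0 ≤ ω k) → HasSum ω 1 →
        (∀ k, ω k = (c / f k a) * (1 - ∑ j ∈ Finset.range (k + 1), ω j)) →
        ω = fun k => piPA f c k a :=
  piPA_unique_solution_of_recursion_general c hc f hfpos hdiv a
end

section
/- For probability measures ω and ρ on a countable set S with ρ(s) > 0 whenever ω(s) > 0, the relative entropy admits the variational characterization H(ω ∥ ρ) = sup over bounded functions g : S → ℝ of [∑_s g(s)ω(s) − log ∑_s e^{g(s)} ρ(s)]. -/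
/-! Gibbs' inequality `a - b ≤ a log (a / b)`, summed against the tilted measure
`exp g * ρ / Z` with `Z = ∑ exp g * ρ`, gives `∑ g ω - log Z ≤ H(ω ∥ ρ)` for every bounded `g`.
Conversely, `g = log (ω / ρ)` on a finite set `A ⊆ supp ω` and `g = c` elsewhere has
`Z ≤ 1 + exp c`, so its value is at least `∑_{A} ω log (ω / ρ) + c (1 - ω(A)) - log (1 + exp c)`.
Let `c → -∞` and then `A` exhaust `S`: the partial sums `∑_{A} ω log (ω / ρ)` tend to `H(ω ∥ ρ)`
in `EReal`, also when the series diverges, because its terms are bounded below by `ω - ρ`. -/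

open Classical

/-- Relative entropy `H(ω ∥ ρ) = ∑_s ω(s) log(ω(s)/ρ(s))` of probability mass
functions on a countable set, with values in `EReal`: it is `+∞` if `ω` is not
absolutely continuous with respect to `ρ` or if the defining series does not
converge (for probability mass functions the negative part is always summable,
so non-summability means `H = +∞`). -/
noncomputable def relEnt {S : Type*} (ω ρ : S → ℝ) : EReal :=
  if (∀ s, ρ s = 0 → ω s = 0) ∧ Summable (fun s => ω s * Real.log (ω s / ρ s))
    then ((∑' s, ω s * Real.log (ω s / ρ s) : ℝ) : EReal) else ⊤

open Real Filter Topology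

lemma Real.sub_le_mul_log_div {a b : ℝ} (ha : 0 ≤ a) (hb : 0 ≤ b) (hab : 0 < a → 0 < b) :
    a - b ≤ a * log (a / b) := by
  rcases ha.eq_or_lt with rfl | ha
  · simpa using hb
  have hb := hab ha
  have h := mul_le_mul_of_nonneg_left (one_sub_inv_le_log_of_pos (div_pos ha hb)) ha.le
  rwa [inv_div, mul_sub, mul_one, mul_div_cancel₀ _ ha.ne'] at h

lemma tendsto_finset_sum_atTop_of_not_summable {ι : Type*} {f : ι → ℝ} (hf : ∀ i, 0 ≤ f i)
    (h : ¬ Summable f) : Tendsto (fun A : Finset ι => ∑ i ∈ A, f i) atTop atTop := by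
  refine tendsto_atTop_atTop_of_monotone (Finset.sum_mono_set_of_nonneg hf) fun b => ?_
  by_contra! hb
  exact h (summable_of_sum_le hf fun A => (hb A).le)

lemma HasSum.ite_finset {ι α : Type*} [AddCommGroup α] [TopologicalSpace α]
    [IsTopologicalAddGroup α] {f : ι → α} {a : α} (hf : HasSum f a) (B : Finset ι) (φ : ι → α) :
    HasSum (fun i => if i ∈ B then φ i else f i) (a + ∑ i ∈ B, (φ i - f i)) := by
  convert hf.add (hasSum_sum_of_ne_finset_zero (s := B)
    (f := fun i => if i ∈ B then φ i - f i else 0) fun i hi => if_neg hi) using 1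
  · funext i
    split_ifs <;> abel
  · simp

lemma Real.mul_sub_mul_log_le {a r x Z : ℝ} (ha : 0 ≤ a) (hr : 0 ≤ r) (har : 0 < a → 0 < r)
    (hZ : 0 < Z) : x * a - a * log Z ≤ a * log (a / r) - a + exp x * r / Z := by
  rcases ha.eq_or_lt with rfl | ha
  · simp only [mul_zero, zero_mul, sub_zero, zero_div, log_zero, zero_add]
    positivity
  have hr := har ha
  have hb : 0 < exp x * r / Z := by positivity
  have hlog : log (a / (exp x * r / Z)) = log (a / r) - x + log Z := by
    rw [log_div ha.ne' hb.ne', log_div (by positivity) hZ.ne', log_mul (exp_ne_zero x) hr.ne',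
      log_exp, log_div ha.ne' hr.ne']
    ring
  have h := Real.sub_le_mul_log_div ha.le hb.le fun _ => hb
  rw [hlog] at h
  linarith

noncomputable def donskerVaradhanFunctional {S : Type*} (ω ρ g : S → ℝ) : ℝ :=
  ∑' s, g s * ω s - log (∑' s, exp (g s) * ρ s)

section

variable {S : Type*} {ω ρ : S → ℝ}

lemma donskerVaradhanFunctional_le_tsum_mul_log_div (hωnn : ∀ s, 0 ≤ ω s) (hω : HasSum ω 1)
    (hρnn : ∀ s, 0 ≤ ρ s) (habs : ∀ s, 0 < ω s → 0 < ρ s)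
    (hsum : Summable fun s => ω s * log (ω s / ρ s)) {g : S → ℝ}
    (hgω : Summable fun s => g s * ω s) (hgρ : Summable fun s => exp (g s) * ρ s) :
    donskerVaradhanFunctional ω ρ g ≤ ∑' s, ω s * log (ω s / ρ s) := by
  obtain ⟨s₀, hs₀⟩ : ∃ s, 0 < ω s := by
    by_contra! h
    have : ω = 0 := funext fun s => le_antisymm (h s) (hωnn s)
    exact zero_ne_one (hasSum_zero.unique (this ▸ hω))
  set Z := ∑' s, exp (g s) * ρ s
  have hZ : 0 < Z := hgρ.tsum_pos (fun s => by have := hρnn s; positivity) s₀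
    (mul_pos (exp_pos _) (habs s₀ hs₀))
  have h := hasSum_le (fun s => Real.mul_sub_mul_log_le (hωnn s) (hρnn s) (habs s) hZ)
    (hgω.hasSum.sub (hω.mul_right (log Z))) ((hsum.hasSum.sub hω).add (hgρ.hasSum.div_const Z))
  rw [div_self hZ.ne'] at h
  unfold donskerVaradhanFunctional
  linarith

lemma donskerVaradhanFunctional_le_relEnt (hωnn : ∀ s, 0 ≤ ω s) (hω : HasSum ω 1)
    (hρnn : ∀ s, 0 ≤ ρ s) (hρ : Summable ρ) (habs : ∀ s, 0 < ω s → 0 < ρ s) {g : S → ℝ} {C : ℝ}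
    (hg : ∀ s, |g s| ≤ C) : (donskerVaradhanFunctional ω ρ g : EReal) ≤ relEnt ω ρ := by
  unfold relEnt
  split_ifs with h
  · refine EReal.coe_le_coe_iff.2 (donskerVaradhanFunctional_le_tsum_mul_log_div hωnn hω hρnn
      habs h.2 ?_ ?_)
    · refine (hω.summable.mul_left C).of_norm_bounded fun s => ?_
      rw [norm_mul, norm_of_nonneg (hωnn s)]
      exact mul_le_mul_of_nonneg_right (hg s) (hωnn s)
    · refine (hρ.mul_left (exp C)).of_nonneg_of_le (fun s => by have := hρnn s; positivity)
        fun s => mul_le_mul_of_nonneg_right (exp_le_exp.2 (abs_le.1 (hg s)).2) (hρnn s)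
  · exact le_top

lemma tendsto_sum_mul_log_div_relEnt (hωnn : ∀ s, 0 ≤ ω s) (hω : Summable ω)
    (hρnn : ∀ s, 0 ≤ ρ s) (hρ : Summable ρ) (habs : ∀ s, 0 < ω s → 0 < ρ s) :
    Tendsto (fun A : Finset S => ((∑ s ∈ A, ω s * log (ω s / ρ s) : ℝ) : EReal)) atTop
      (𝓝 (relEnt ω ρ)) := by
  have hac : ∀ s, ρ s = 0 → ω s = 0 := fun s hρ0 =>
    (hωnn s).eq_or_lt.elim Eq.symm fun h => absurd hρ0 (habs s h).ne'
  unfold relEnt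
  by_cases hsum : Summable fun s => ω s * log (ω s / ρ s)
  · rw [if_pos ⟨hac, hsum⟩]
    exact (continuous_coe_real_ereal.tendsto _).comp hsum.hasSum
  rw [if_neg fun h => hsum h.2]
  refine EReal.tendsto_coe_atTop.comp ?_
  -- Adding `ρ - ω` makes the terms nonnegative without changing summability.
  have hnn : ∀ s, 0 ≤ ω s * log (ω s / ρ s) - ω s + ρ s := fun s => by
    linarith [Real.sub_le_mul_log_div (hωnn s) (hρnn s) (habs s)]
  have hns : ¬ Summable fun s => ω s * log (ω s / ρ s) - ω s + ρ s := fun h =>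
    hsum <| ((h.add hω).sub hρ).congr fun s => by ring
  convert (tendsto_finset_sum_atTop_of_not_summable hnn hns).atTop_add
    (hω.hasSum.sub hρ.hasSum) using 1
  funext A
  rw [← Finset.sum_add_distrib]
  exact Finset.sum_congr rfl fun s _ => by ring

lemma exists_bounded_le_donskerVaradhanFunctional (hωnn : ∀ s, 0 ≤ ω s) (hω : HasSum ω 1)
    (hρnn : ∀ s, 0 ≤ ρ s) (hρ : HasSum ρ 1) (habs : ∀ s, 0 < ω s → 0 < ρ s)
    (A : Finset S) (c : ℝ) :
    ∃ g : S → ℝ, (∃ C, ∀ s, |g s| ≤ C) ∧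
      ∑ s ∈ A, ω s * log (ω s / ρ s) + c * (1 - ∑ s ∈ A, ω s) - log (1 + exp c)
        ≤ donskerVaradhanFunctional ω ρ g := by
  set B := A.filter (0 < ω ·)
  have hB : ∀ f : S → ℝ, (∀ s, ω s = 0 → f s = 0) → ∑ s ∈ B, f s = ∑ s ∈ A, f s := fun f hf =>
    Finset.sum_filter_of_ne fun s _ hfs => (hωnn s).lt_of_ne fun h => hfs (hf s h.symm)
  set g : S → ℝ := fun s => if s ∈ B then log (ω s / ρ s) else c
  refine ⟨g, ⟨|c| + ∑ s ∈ B, |log (ω s / ρ s)|, fun s => ?_⟩, ?_⟩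
  · by_cases hs : s ∈ B
    · simp only [g, if_pos hs]
      have := Finset.single_le_sum (f := fun s => |log (ω s / ρ s)|) (fun _ _ => abs_nonneg _) hs
      linarith [abs_nonneg c]
    · simp only [g, if_neg hs]
      linarith [Finset.sum_nonneg fun s (_ : s ∈ B) => abs_nonneg (log (ω s / ρ s))]
  have hgω : HasSum (fun s => g s * ω s)
      (c * 1 + ∑ s ∈ B, (ω s * log (ω s / ρ s) - c * ω s)) := by
    have hfun : (fun s => g s * ω s)
        = fun s => if s ∈ B then ω s * log (ω s / ρ s) else c * ω s := by
      funext s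
      split_ifs with hs
      · simp only [g, if_pos hs, mul_comm]
      · simp only [g, if_neg hs]
    exact hfun ▸ (hω.mul_left c).ite_finset B _
  have hgρ : HasSum (fun s => exp (g s) * ρ s) (exp c * 1 + ∑ s ∈ B, (ω s - exp c * ρ s)) := by
    have hfun : (fun s => exp (g s) * ρ s) = fun s => if s ∈ B then ω s else exp c * ρ s := by
      funext s
      split_ifs with hs
      · have hωs := (Finset.mem_filter.1 hs).2
        simp only [g, if_pos hs]
        rw [exp_log (div_pos hωs (habs s hωs)), div_mul_cancel₀ _ (habs s hωs).ne']
      · simp only [g, if_neg hs]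
    exact hfun ▸ (hρ.mul_left (exp c)).ite_finset B ω
  have hZ : ∑' s, exp (g s) * ρ s ≤ 1 + exp c := by
    rw [hgρ.tsum_eq, Finset.sum_sub_distrib, ← Finset.mul_sum, hB ω fun _ => id]
    nlinarith [sum_le_hasSum A (fun s _ => hωnn s) hω, sum_le_hasSum B (fun s _ => hρnn s) hρ,
      Finset.sum_nonneg fun s (_ : s ∈ B) => hρnn s, exp_pos c]
  have hlogZ : log (∑' s, exp (g s) * ρ s) ≤ log (1 + exp c) := by
    rcases (tsum_nonneg fun s => mul_nonneg (exp_pos (g s)).le (hρnn s)).eq_or_lt with h | h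
    · rw [← h, log_zero]
      exact log_nonneg (by linarith [exp_pos c])
    · exact log_le_log h hZ
  unfold donskerVaradhanFunctional
  rw [hgω.tsum_eq, Finset.sum_sub_distrib, ← Finset.mul_sum, hB ω fun _ => id,
    hB _ fun s h => by simp [h]]
  linarith

lemma exists_bounded_lt_donskerVaradhanFunctional (hωnn : ∀ s, 0 ≤ ω s) (hω : HasSum ω 1)
    (hρnn : ∀ s, 0 ≤ ρ s) (hρ : HasSum ρ 1) (habs : ∀ s, 0 < ω s → 0 < ρ s) {x : ℝ}
    (hx : (x : EReal) < relEnt ω ρ) :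
    ∃ g : S → ℝ, (∃ C, ∀ s, |g s| ≤ C) ∧ x < donskerVaradhanFunctional ω ρ g := by
  obtain ⟨y, hxy, hy⟩ := EReal.lt_iff_exists_real_btwn.1 hx
  have hε : 0 < y - x := sub_pos.2 (EReal.coe_lt_coe_iff.1 hxy)
  set c := log ((y - x) / 4)
  have hc : log (1 + exp c) < (y - x) / 2 := by
    have hexp : exp c = (y - x) / 4 := exp_log (by positivity)
    linarith [log_le_sub_one_of_pos (x := 1 + exp c) (by positivity)]
  have hsum : ∀ᶠ A in atTop, y < ∑ s ∈ A, ω s * log (ω s / ρ s) :=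
    ((tendsto_sum_mul_log_div_relEnt hωnn hω.summable hρnn hρ.summable habs).eventually
      (lt_mem_nhds hy)).mono fun _ => EReal.coe_lt_coe_iff.1
  have hmass : ∀ᶠ A in atTop, -((y - x) / 2) < c * (1 - ∑ s ∈ A, ω s) :=
    (hω.const_sub 1 |>.const_mul c).eventually (lt_mem_nhds (by simp; linarith))
  obtain ⟨A, hsumA, hmassA⟩ := (hsum.and hmass).exists
  obtain ⟨g, hg, hle⟩ := exists_bounded_le_donskerVaradhanFunctional hωnn hω hρnn hρ habs A c
  exact ⟨g, hg, by linarith⟩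

end

theorem relativeEntropy_variational_general
    {S : Type*}
    (ω ρ : S → ℝ)
    (hωnn : ∀ s, 0 ≤ ω s) (hω : HasSum ω 1)
    (hρnn : ∀ s, 0 ≤ ρ s) (hρ : HasSum ρ 1)
    (habs : ∀ s, 0 < ω s → 0 < ρ s) :
    relEnt ω ρ
      = ⨆ g : {g : S → ℝ // ∃ C, ∀ s, |g s| ≤ C},
          (((∑' s, g.1 s * ω s) - Real.log (∑' s, Real.exp (g.1 s) * ρ s) : ℝ) : EReal) := by
  refine le_antisymm (le_of_forall_lt fun c hc => ?_) (iSup_le fun ⟨g, C, hC⟩ => ?_)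
  · obtain ⟨x, hcx, hx⟩ := EReal.lt_iff_exists_real_btwn.1 hc
    obtain ⟨g, hg, hxg⟩ := exists_bounded_lt_donskerVaradhanFunctional hωnn hω hρnn hρ habs hx
    exact hcx.trans <| (EReal.coe_lt_coe_iff.2 hxg).trans_le <|
      le_iSup_of_le (⟨g, hg⟩ : {g : S → ℝ // ∃ C, ∀ s, |g s| ≤ C}) le_rfl
  · exact donskerVaradhanFunctional_le_relEnt hωnn hω hρnn hρ.summable habs hC

/-- variational characterization of relative entropy on a countable set:
`H(ω ∥ ρ) = sup_{g bounded} [∑_s g(s)ω(s) − log ∑_s e^{g(s)} ρ(s)]`. -/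
theorem relativeEntropy_variational
    {S : Type*} [Countable S]
    (ω ρ : S → ℝ)
    (hωnn : ∀ s, 0 ≤ ω s) (hω : HasSum ω 1)
    (hρnn : ∀ s, 0 ≤ ρ s) (hρ : HasSum ρ 1)
    (habs : ∀ s, 0 < ω s → 0 < ρ s) :
    relEnt ω ρ
      = ⨆ g : {g : S → ℝ // ∃ C, ∀ s, |g s| ≤ C},
          (((∑' s, g.1 s * ω s) - Real.log (∑' s, Real.exp (g.1 s) * ρ s) : ℝ) : EReal) :=
  relativeEntropy_variational_general ω ρ hωnn hω hρnn hρ habs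
end
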